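/- Let 1 ≤ a < b and let B¹, B³ : [a,b] → ℝ with B¹(x) < 0 for all x ∈ [a,b]. Then the Hermitian operator H^Ising_{[a,b]} + Σ_{x=a}^{b} (B¹(x)S¹_x + B³(x)S³_x) on ⊗_{x=a}^{b} ℂ² has a simple (non-degenerate) lowest eigenvalue, and the corresponding eigenvector can be chosen with strictly positive components in the standard product basis. -/

import Mathlib

open Matrix Finset
open scoped ComplexOrder

noncomputable section

/-- Configuration space of a chain of `L` spins-1/2: `ℋ_L = ⊗_{x=1}^L ℂ²`
is identified with functions `Conf L → ℂ`. Value `0` is spin up `|↑⟩`,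
value `1` is spin down `|↓⟩`. -/
abbrev Conf (L : ℕ) := Fin L → Fin 2

def S1 : Matrix (Fin 2) (Fin 2) ℂ := !![0, 1/2; 1/2, 0]
def S2 : Matrix (Fin 2) (Fin 2) ℂ := !![0, -Complex.I/2; Complex.I/2, 0]
def S3 : Matrix (Fin 2) (Fin 2) ℂ := !![1/2, 0; 0, -1/2]

/-- The one-site operator `A` acting on the `x`-th (0-based) tensor factor of `ℋ_L`. -/
def siteOp (L : ℕ) (A : Matrix (Fin 2) (Fin 2) ℂ) (x : ℕ) :
    Matrix (Conf L) (Conf L) ℂ :=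
  fun m n =>
    if hx : x < L then
      A (m ⟨x, hx⟩) (n ⟨x, hx⟩) *
        ∏ y ∈ Finset.univ.erase (⟨x, hx⟩ : Fin L), (if m y = n y then 1 else 0)
    else 0

/-- The Ising bond interaction `h^Ising_{x,x+1}` (with `x` 0-based). -/
def hIsing (L : ℕ) (x : ℕ) : Matrix (Conf L) (Conf L) ℂ :=
  -(siteOp L S3 x * siteOp L S3 (x + 1))
    + ((1 / 2 : ℝ) : ℂ) • (siteOp L S3 x - siteOp L S3 (x + 1))
    + ((1 / 4 : ℝ) : ℂ) • 1

/-- The Ising kink Hamiltonian `H^Ising = ∑_{x=1}^{L-1} h^Ising_{x,x+1}`. -/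
def HIsing (L : ℕ) : Matrix (Conf L) (Conf L) ℂ :=
  ∑ x ∈ Finset.range (L - 1), hIsing L x

/-- The set of (real) eigenvalues of a matrix. -/
def eigSet {n : Type*} [Fintype n] [DecidableEq n] (H : Matrix n n ℂ) : Set ℝ :=
  {μ : ℝ | ∃ ψ : n → ℂ, ψ ≠ 0 ∧ H.mulVec ψ = (μ : ℂ) • ψ}

/-- Euclidean norm of `𝐁(x) ∈ ℝ³`. -/
def bnorm (b : Fin 3 → ℝ) : ℝ := Real.sqrt (b 0 ^ 2 + b 1 ^ 2 + b 2 ^ 2)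

/-- The magnetic field term `𝐁(x)·𝐒_x` at (0-based) site `x`. -/
def fieldOp (L : ℕ) (b : Fin 3 → ℝ) (x : ℕ) : Matrix (Conf L) (Conf L) ℂ :=
  (b 0 : ℂ) • siteOp L S1 x + (b 1 : ℂ) • siteOp L S2 x + (b 2 : ℂ) • siteOp L S3 x

/-!
The operator is a real symmetric matrix in the product basis: the Ising part and the `S³` fields
are diagonal, and the transverse field `∑ B¹(x) S¹_x` only connects configurations differing by
one spin flip, with weight `B¹(x)/2 < 0`. Hence all off-diagonal entries are `≤ 0` and the graph
of nonzero entries is the (connected) hypercube. For such matrices the Perron–Frobenius argument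
applies: if `ψ` is a ground state, so is `|ψ|`, since replacing `ψ` by `|ψ|` can only lower the
energy; a nonnegative ground state vanishing somewhere vanishes at every neighbour, hence
everywhere; and any real ground state minus a suitable multiple of a positive one is a
nonnegative ground state with a zero, so the ground space is one-dimensional.
-/

open Complex

theorem SimpleGraph.Reachable.mem_of_forall_adj {V : Type*} {G : SimpleGraph V} {S : Set V}
    (hS : ∀ u v, G.Adj u v → u ∈ S → v ∈ S) {u v : V} (huv : G.Reachable u v)
    (hu : u ∈ S) : v ∈ S := by
  obtain ⟨p⟩ := huv
  induction p with
  | nil => exact hu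
  | cons hadj _ ih => exact ih (hS _ _ hadj hu)

theorem SimpleGraph.preconnected_of_adj_update {ι : Type*} [Fintype ι] [DecidableEq ι]
    {β : ι → Type*} {G : SimpleGraph (∀ i, β i)}
    (hG : ∀ x i (b : β i), b ≠ x i → G.Adj x (Function.update x i b)) : G.Preconnected := by
  intro x y
  have key : ∀ s : Finset ι, G.Reachable x (s.piecewise y x) := by
    intro s
    induction s using Finset.induction_on with
    | empty => simp
    | insert i s _ ih =>
      rw [Finset.piecewise_insert]
      refine ih.trans ?_
      by_cases h : y i = s.piecewise y x i
      · rw [h, Function.update_eq_self]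
      · exact (hG _ i _ h).reachable
  simpa using key univ

namespace Matrix

theorem sub_smul_one_mulVec_eq_zero_iff {n R : Type*} [Fintype n] [DecidableEq n] [CommRing R]
    {M : Matrix n n R} {c : R} {v : n → R} : (M - c • 1) *ᵥ v = 0 ↔ M *ᵥ v = c • v := by
  rw [sub_mulVec, smul_mulVec, one_mulVec, sub_eq_zero]

variable {n : Type*} {M : Matrix n n ℂ}

theorem IsHermitian.im_apply_eq_zero (hM : M.IsHermitian) (hoff : ∀ i j, i ≠ j → M i j ≤ 0)
    (i j : n) : (M i j).im = 0 := by
  obtain rfl | hij := eq_or_ne i j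
  · exact conj_eq_iff_im.1 (hM.apply i i)
  · exact (nonpos_iff.1 (hoff i j hij)).2

variable [Fintype n]

theorem mulVec_ofReal_comp_eq_smul (hM : ∀ i j, (M i j).im = 0) (f : ℂ →ₗ[ℝ] ℝ)
    {E : ℝ} {ψ : n → ℂ} (hψ : M *ᵥ ψ = (E : ℂ) • ψ) :
    M *ᵥ (fun i => (f (ψ i) : ℂ)) = (E : ℂ) • fun i => (f (ψ i) : ℂ) := by
  have hf : ∀ w z : ℂ, w.im = 0 → f (w * z) = w.re * f z := fun w z hw => by
    conv_lhs => rw [← re_add_im w, hw, ofReal_zero, zero_mul, add_zero, ← real_smul, map_smul]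
    rfl
  funext i
  have h := congrArg f (congrFun hψ i)
  simp only [mulVec, dotProduct, Pi.smul_apply, smul_eq_mul, map_sum, hf _ _ (hM _ _),
    hf _ _ (ofReal_im E), ofReal_re] at h
  apply Complex.ext <;> simp [mulVec, dotProduct, re_sum, im_sum, hM, h]

theorem re_dotProduct_mulVec_norm_le (hM : M.IsHermitian) (hoff : ∀ i j, i ≠ j → M i j ≤ 0)
    (ψ : n → ℂ) :
    (star (fun i => (‖ψ i‖ : ℂ)) ⬝ᵥ M *ᵥ fun i => (‖ψ i‖ : ℂ)).re ≤
      (star ψ ⬝ᵥ M *ᵥ ψ).re := by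
  simp only [dotProduct, mulVec, Finset.mul_sum, re_sum]
  refine Finset.sum_le_sum fun i _ => Finset.sum_le_sum fun j _ => ?_
  obtain ⟨r, hr⟩ : ∃ r : ℝ, M i j = r :=
    ⟨_, Complex.ext rfl (by simp [hM.im_apply_eq_zero hoff i j])⟩
  rw [hr, mul_left_comm, re_ofReal_mul, mul_left_comm, re_ofReal_mul]
  obtain rfl | hne := eq_or_ne i j
  · simp only [Pi.star_apply, star_def, conj_mul', conj_ofReal, ← ofReal_mul, ofReal_re, sq,
      le_refl]
  · refine mul_le_mul_of_nonpos_left ?_ (by exact_mod_cast hr ▸ hoff i j hne)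
    simpa [norm_mul] using re_le_norm (star (ψ i) * ψ j)

theorem eq_zero_of_nonneg_of_mulVec_eq_smul (hM : M.IsHermitian)
    (hoff : ∀ i j, i ≠ j → M i j ≤ 0)
    (hconn : (SimpleGraph.fromRel fun i j => M i j ≠ 0).Preconnected) {c : ℂ} {v : n → ℝ}
    (hv : 0 ≤ v) (hMv : M *ᵥ (fun i => (v i : ℂ)) = c • fun i => (v i : ℂ)) {i : n}
    (hi : v i = 0) : v = 0 := by
  funext j
  refine (hconn i j).mem_of_forall_adj (S := {k | v k = 0}) ?_ hi
  rintro k l ⟨-, hkl⟩ (hk : v k = 0)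
  have hMkl : M k l ≠ 0 := hkl.elim id fun h => by rwa [← hM.apply k l, star_ne_zero]
  have hterms : ∀ m ∈ univ, M k m * (v m : ℂ) ≤ 0 := by
    intro m _
    obtain rfl | hkm := eq_or_ne k m
    · simp [hk]
    · exact mul_nonpos_of_nonpos_of_nonneg (hoff k m hkm) (zero_le_real.2 (hv m))
  have hrow : ∑ m, M k m * (v m : ℂ) = 0 := by
    simpa [mulVec, dotProduct, hk] using congrFun hMv k
  simpa [hMkl] using (Finset.sum_eq_zero_iff_of_nonpos hterms).1 hrow l (mem_univ l)

theorem eq_smul_of_mulVec_eq_smul_of_pos (hM : M.IsHermitian)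
    (hoff : ∀ i j, i ≠ j → M i j ≤ 0)
    (hconn : (SimpleGraph.fromRel fun i j => M i j ≠ 0).Connected) {E : ℝ} {p u : n → ℝ}
    (hp : ∀ i, 0 < p i) (hMp : M *ᵥ (fun i => (p i : ℂ)) = (E : ℂ) • fun i => (p i : ℂ))
    (hMu : M *ᵥ (fun i => (u i : ℂ)) = (E : ℂ) • fun i => (u i : ℂ)) :
    ∃ t : ℝ, u = t • p := by
  have := hconn.nonempty
  obtain ⟨k, hk⟩ := Finite.exists_min fun i => u i / p i
  refine ⟨u k / p k, sub_eq_zero.1 ?_⟩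
  refine eq_zero_of_nonneg_of_mulVec_eq_smul hM hoff hconn.preconnected (c := E) (i := k) ?_ ?_ ?_
  · intro i
    have := (le_div_iff₀ (hp i)).1 (hk i)
    simp only [Pi.zero_apply, Pi.sub_apply, Pi.smul_apply, smul_eq_mul]
    linarith
  · have hcast : (fun i => ((u - (u k / p k) • p) i : ℂ))
        = (fun i => (u i : ℂ)) - ((u k / p k : ℝ) : ℂ) • fun i => (p i : ℂ) := by
      funext i; simp
    rw [hcast, mulVec_sub, mulVec_smul, hMu, hMp, smul_sub, smul_comm]
  · simp [div_mul_cancel₀ _ (hp k).ne']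

theorem eigenspace_eq_span_of_pos (hM : M.IsHermitian) (hoff : ∀ i j, i ≠ j → M i j ≤ 0)
    (hconn : (SimpleGraph.fromRel fun i j => M i j ≠ 0).Connected) {E : ℝ} {p : n → ℝ}
    (hp : ∀ i, 0 < p i)
    (hMp : M *ᵥ (fun i => (p i : ℂ)) = (E : ℂ) • fun i => (p i : ℂ)) :
    Module.End.eigenspace (mulVecLin M) (E : ℂ) = ℂ ∙ fun i => (p i : ℂ) := by
  refine le_antisymm (fun ψ hψ => ?_) ((Submodule.span_singleton_le_iff_mem _ _).2
    (Module.End.mem_eigenspace_iff.2 hMp))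
  rw [Module.End.mem_eigenspace_iff, mulVecLin_apply] at hψ
  have hreal := hM.im_apply_eq_zero hoff
  obtain ⟨t₁, ht₁⟩ := eq_smul_of_mulVec_eq_smul_of_pos hM hoff hconn hp hMp
    (mulVec_ofReal_comp_eq_smul hreal reLm hψ)
  obtain ⟨t₂, ht₂⟩ := eq_smul_of_mulVec_eq_smul_of_pos hM hoff hconn hp hMp
    (mulVec_ofReal_comp_eq_smul hreal imLm hψ)
  refine Submodule.mem_span_singleton.2 ⟨t₁ + t₂ * I, funext fun i => ?_⟩
  have h₁ : (ψ i).re = t₁ * p i := congrFun ht₁ i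
  have h₂ : (ψ i).im = t₂ * p i := congrFun ht₂ i
  apply Complex.ext <;> simp [h₁, h₂]

variable [DecidableEq n]

theorem IsHermitian.eigSet_eq_range_eigenvalues (hM : M.IsHermitian) :
    eigSet M = Set.range hM.eigenvalues := by
  ext μ
  constructor
  · rintro ⟨ψ, hψ, hMψ⟩
    have hμ : Module.End.HasEigenvalue (toLin' M) (μ : ℂ) :=
      Module.End.hasEigenvalue_of_hasEigenvector
        ⟨Module.End.mem_eigenspace_iff.2 (by rwa [toLin'_apply]), hψ⟩
    have h := hμ.mem_spectrum
    rw [spectrum_toLin', hM.spectrum_eq_image_range] at h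
    obtain ⟨_, ⟨i, rfl⟩, hi⟩ := h
    exact ⟨i, ofReal_injective hi⟩
  · rintro ⟨i, rfl⟩
    refine ⟨_, ?_, by simpa [Complex.coe_smul] using hM.mulVec_eigenvectorBasis i⟩
    exact (WithLp.ofLp_eq_zero 2).ne.2 <| hM.eigenvectorBasis.orthonormal.ne_zero i

theorem IsHermitian.posSemidef_sub_smul_one (hM : M.IsHermitian) {E : ℝ}
    (hE : ∀ i, E ≤ hM.eigenvalues i) : (M - (E : ℂ) • 1).PosSemidef := by
  rw [posSemidef_iff_isHermitian_and_spectrum_nonneg, ← Algebra.algebraMap_eq_smul_one,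
    ← spectrum.sub_singleton_eq, hM.spectrum_eq_image_range]
  refine ⟨hM.sub (IsSelfAdjoint.algebraMap _ (conj_ofReal E)), ?_⟩
  rintro _ ⟨_, ⟨_, ⟨i, rfl⟩, rfl⟩, _, rfl, rfl⟩
  simpa [← ofReal_sub] using hE i

theorem mulVec_norm_eq_smul_of_posSemidef (hoff : ∀ i j, i ≠ j → M i j ≤ 0)
    {E : ℝ} (hE : (M - (E : ℂ) • 1).PosSemidef) {ψ : n → ℂ}
    (hψ : M *ᵥ ψ = (E : ℂ) • ψ) :
    M *ᵥ (fun i => (‖ψ i‖ : ℂ)) = (E : ℂ) • fun i => (‖ψ i‖ : ℂ) := by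
  have hoffE : ∀ i j, i ≠ j → (M - (E : ℂ) • 1) i j ≤ 0 := fun i j hij => by
    simpa [one_apply_ne hij] using hoff i j hij
  have hle := re_dotProduct_mulVec_norm_le hE.1 hoffE ψ
  rw [sub_smul_one_mulVec_eq_zero_iff.2 hψ, dotProduct_zero, zero_re] at hle
  have hge := hE.dotProduct_mulVec_nonneg fun i => (‖ψ i‖ : ℂ)
  rw [← sub_smul_one_mulVec_eq_zero_iff, ← hE.dotProduct_mulVec_zero_iff]
  exact le_antisymm (nonpos_iff.2 ⟨hle, (nonneg_iff.1 hge).2.symm⟩) hge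

theorem exists_ground_state_of_nonpos_offDiag (hM : M.IsHermitian)
    (hoff : ∀ i j, i ≠ j → M i j ≤ 0)
    (hconn : (SimpleGraph.fromRel fun i j => M i j ≠ 0).Connected) :
    ∃ E : ℝ, IsLeast (eigSet M) E ∧
      Module.finrank ℂ (Module.End.eigenspace (mulVecLin M) ((E : ℝ) : ℂ)) = 1 ∧
      ∃ φ : n → ℂ, M *ᵥ φ = (E : ℂ) • φ ∧
        ∀ m : n, ∃ r : ℝ, 0 < r ∧ φ m = (r : ℂ) := by
  have := hconn.nonempty
  obtain ⟨i₀, hi₀⟩ := Finite.exists_min hM.eigenvalues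
  have hleast : IsLeast (eigSet M) (hM.eigenvalues i₀) := by
    rw [hM.eigSet_eq_range_eigenvalues]
    exact ⟨⟨i₀, rfl⟩, by rintro _ ⟨i, rfl⟩; exact hi₀ i⟩
  obtain ⟨ψ, hψ0, hψ⟩ := hleast.1
  have hφ := mulVec_norm_eq_smul_of_posSemidef hoff (hM.posSemidef_sub_smul_one hi₀) hψ
  have hpos : ∀ i, 0 < ‖ψ i‖ := by
    intro i
    refine (norm_nonneg _).lt_of_ne fun h => hψ0 ?_
    have h0 := eq_zero_of_nonneg_of_mulVec_eq_smul hM hoff hconn.preconnected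
      (fun _ => norm_nonneg _) hφ h.symm
    exact funext fun j => norm_eq_zero.1 (congrFun h0 j)
  refine ⟨_, hleast, ?_, _, hφ, fun i => ⟨_, hpos i, rfl⟩⟩
  rw [eigenspace_eq_span_of_pos hM hoff hconn hpos hφ]
  exact finrank_span_singleton fun h => (hpos i₀).ne' (by simpa using congrFun h i₀)

end Matrix

theorem siteOp_apply {L x : ℕ} (hx : x < L) (A : Matrix (Fin 2) (Fin 2) ℂ) (m n : Conf L) :
    siteOp L A x m n =
      if ∀ y, y ≠ ⟨x, hx⟩ → m y = n y then A (m ⟨x, hx⟩) (n ⟨x, hx⟩) else 0 := by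
  simp only [siteOp, dif_pos hx, Finset.prod_boole, mem_erase, mem_univ, and_true]
  split_ifs <;> simp

theorem siteOp_of_le {L x : ℕ} (hx : L ≤ x) (A : Matrix (Fin 2) (Fin 2) ℂ) :
    siteOp L A x = 0 := by
  ext m n
  simp [siteOp, not_lt.2 hx]

theorem siteOp_conjTranspose (L : ℕ) (A : Matrix (Fin 2) (Fin 2) ℂ) (x : ℕ) :
    (siteOp L A x)ᴴ = siteOp L Aᴴ x := by
  by_cases hx : x < L
  · ext m n
    simp only [conjTranspose_apply, siteOp_apply hx, eq_comm (a := n _)]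
    split_ifs <;> simp
  · simp [siteOp_of_le (not_lt.1 hx)]

theorem siteOp_diagonal {L x : ℕ} (hx : x < L) (d : Fin 2 → ℂ) :
    siteOp L (diagonal d) x = diagonal fun m => d (m ⟨x, hx⟩) := by
  ext m n
  rw [siteOp_apply hx]
  obtain rfl | hmn := eq_or_ne m n
  · simp
  · rw [diagonal_apply_ne _ hmn]
    split_ifs with h
    · refine diagonal_apply_ne _ fun hx' => hmn (funext fun y => ?_)
      by_cases hy : y = ⟨x, hx⟩
      · rwa [hy]
      · exact h y hy
    · rfl

theorem siteOp_apply_nonneg {A : Matrix (Fin 2) (Fin 2) ℂ} (hA : ∀ i j, 0 ≤ A i j) (L x : ℕ)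
    (m n : Conf L) : 0 ≤ siteOp L A x m n := by
  by_cases hx : x < L
  · rw [siteOp_apply hx]
    split_ifs
    exacts [hA _ _, le_rfl]
  · simp [siteOp_of_le (not_lt.1 hx)]

theorem siteOp_apply_update_self {L : ℕ} (A : Matrix (Fin 2) (Fin 2) ℂ) (m : Conf L) (z : Fin L)
    (s : Fin 2) : siteOp L A z m (Function.update m z s) = A (m z) s := by
  rw [siteOp_apply z.isLt, if_pos fun y hy => (Function.update_of_ne hy _ _).symm,
    Function.update_self]

theorem siteOp_apply_update_of_ne {L x : ℕ} (hx : x < L) (A : Matrix (Fin 2) (Fin 2) ℂ)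
    {m : Conf L} {z : Fin L} (hz : z ≠ ⟨x, hx⟩) {s : Fin 2} (hs : s ≠ m z) :
    siteOp L A x m (Function.update m z s) = 0 := by
  rw [siteOp_apply hx, if_neg fun h => hs (by simpa using (h z hz).symm)]

theorem S1_apply_of_ne {i j : Fin 2} (h : i ≠ j) : S1 i j = 1 / 2 := by
  fin_cases i <;> fin_cases j <;> simp_all [S1]

theorem S1_apply_nonneg (i j : Fin 2) : 0 ≤ S1 i j := by
  fin_cases i <;> fin_cases j <;> norm_num [S1, Complex.le_def]

theorem S1_isHermitian : S1.IsHermitian := by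
  ext i j
  fin_cases i <;> fin_cases j <;> simp [S1]

theorem S3_eq_diagonal : S3 = diagonal fun i => ((![1 / 2, -1 / 2] i : ℝ) : ℂ) := by
  ext i j
  fin_cases i <;> fin_cases j <;> simp [S3]

def realDiagonal (ι : Type*) [Fintype ι] [DecidableEq ι] : Subalgebra ℝ (Matrix ι ι ℂ) :=
  ((diagonalAlgHom ℝ).comp (ofRealAm.compLeft ι)).range

section realDiagonal

variable {ι : Type*} [Fintype ι] [DecidableEq ι] {D : Matrix ι ι ℂ}

theorem mem_realDiagonal :
    D ∈ realDiagonal ι ↔ ∃ d : ι → ℝ, diagonal (fun i => (d i : ℂ)) = D :=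
  Iff.rfl

theorem isHermitian_of_mem_realDiagonal (hD : D ∈ realDiagonal ι) : D.IsHermitian := by
  obtain ⟨d, rfl⟩ := mem_realDiagonal.1 hD
  exact isHermitian_diagonal_of_self_adjoint _ (funext fun i => conj_ofReal (d i))

theorem apply_eq_zero_of_mem_realDiagonal (hD : D ∈ realDiagonal ι) {i j : ι} (hij : i ≠ j) :
    D i j = 0 := by
  obtain ⟨d, rfl⟩ := mem_realDiagonal.1 hD
  exact diagonal_apply_ne _ hij

end realDiagonal

theorem siteOp_S3_mem_realDiagonal (L x : ℕ) : siteOp L S3 x ∈ realDiagonal (Conf L) := by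
  by_cases hx : x < L
  · rw [S3_eq_diagonal, siteOp_diagonal hx]
    exact mem_realDiagonal.2 ⟨_, rfl⟩
  · rw [siteOp_of_le (not_lt.1 hx)]
    exact zero_mem _

theorem HIsing_mem_realDiagonal (L : ℕ) : HIsing L ∈ realDiagonal (Conf L) := by
  refine Subalgebra.sum_mem _ fun x _ => ?_
  simp only [hIsing, Complex.coe_smul]
  have h₀ := siteOp_S3_mem_realDiagonal L x
  have h₁ := siteOp_S3_mem_realDiagonal L (x + 1)
  exact add_mem
    (add_mem (neg_mem (mul_mem h₀ h₁)) (Subalgebra.smul_mem _ (sub_mem h₀ h₁) _))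
    (Subalgebra.smul_mem _ (one_mem _) _)

def transverseField (L : ℕ) (B : ℕ → ℝ) : Matrix (Conf L) (Conf L) ℂ :=
  ∑ x ∈ range L, (B x : ℂ) • siteOp L S1 x

theorem HIsing_add_field_eq (L : ℕ) (B₁ B₃ : ℕ → ℝ) :
    ∃ D ∈ realDiagonal (Conf L),
      HIsing L + ∑ x ∈ range L, ((B₁ x : ℂ) • siteOp L S1 x + (B₃ x : ℂ) • siteOp L S3 x)
        = D + transverseField L B₁ := by
  refine ⟨HIsing L + ∑ x ∈ range L, (B₃ x : ℂ) • siteOp L S3 x,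
    add_mem (HIsing_mem_realDiagonal L) (Subalgebra.sum_mem _ fun x _ => ?_), ?_⟩
  · rw [Complex.coe_smul]
    exact Subalgebra.smul_mem _ (siteOp_S3_mem_realDiagonal L x) _
  · rw [sum_add_distrib, transverseField]
    abel

section transverseField

variable {L : ℕ} {B : ℕ → ℝ}

theorem transverseField_isHermitian : (transverseField L B).IsHermitian := by
  simp only [IsHermitian, transverseField, conjTranspose_sum, conjTranspose_smul,
    siteOp_conjTranspose, S1_isHermitian.eq, star_def, conj_ofReal]

theorem transverseField_apply_nonpos (hB : ∀ x < L, B x ≤ 0) (m n : Conf L) :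
    transverseField L B m n ≤ 0 := by
  rw [transverseField, Matrix.sum_apply]
  refine sum_nonpos fun x hx => ?_
  rw [Matrix.smul_apply, smul_eq_mul]
  exact mul_nonpos_of_nonpos_of_nonneg (by exact_mod_cast hB x (mem_range.1 hx))
    (siteOp_apply_nonneg S1_apply_nonneg L x m n)

theorem transverseField_apply_update (m : Conf L) (z : Fin L) {s : Fin 2} (hs : s ≠ m z) :
    transverseField L B m (Function.update m z s) = (B z / 2 : ℝ) := by
  rw [transverseField, Matrix.sum_apply, sum_eq_single_of_mem z.val (mem_range.2 z.isLt)]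
  · rw [Matrix.smul_apply, siteOp_apply_update_self, S1_apply_of_ne (Ne.symm hs)]
    push_cast
    ring
  · intro x hx hxz
    rw [Matrix.smul_apply, siteOp_apply_update_of_ne (mem_range.1 hx) S1
      (Fin.ne_of_val_ne (Ne.symm hxz)) hs, smul_zero]

variable {D : Matrix (Conf L) (Conf L) ℂ}

theorem isHermitian_add_transverseField (hD : D ∈ realDiagonal (Conf L)) :
    (D + transverseField L B).IsHermitian :=
  (isHermitian_of_mem_realDiagonal hD).add transverseField_isHermitian

theorem add_transverseField_apply_nonpos (hD : D ∈ realDiagonal (Conf L))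
    (hB : ∀ x < L, B x ≤ 0) {m n : Conf L} (hmn : m ≠ n) :
    (D + transverseField L B) m n ≤ 0 := by
  rw [Matrix.add_apply, apply_eq_zero_of_mem_realDiagonal hD hmn, zero_add]
  exact transverseField_apply_nonpos hB m n

theorem connected_add_transverseField (hD : D ∈ realDiagonal (Conf L))
    (hB : ∀ x < L, B x ≠ 0) :
    (SimpleGraph.fromRel fun m n => (D + transverseField L B) m n ≠ 0).Connected := by
  refine (SimpleGraph.connected_iff _).2
    ⟨SimpleGraph.preconnected_of_adj_update ?_, inferInstance⟩
  intro m z s hs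
  have hne : m ≠ Function.update m z s := fun h =>
    hs ((congrFun h z).trans (Function.update_self ..)).symm
  refine (SimpleGraph.fromRel_adj _ _ _).2 ⟨hne, Or.inl ?_⟩
  rw [Matrix.add_apply, apply_eq_zero_of_mem_realDiagonal hD hne, zero_add,
    transverseField_apply_update m z hs, ofReal_ne_zero]
  exact div_ne_zero (hB z z.isLt) two_ne_zero

end transverseField

/-- Sub-site `i` of the chain `Conf (b - a + 1)` is the paper's site `a + i`. -/
theorem ising_perron_frobenius_general
    (a b : ℕ) (hab : a < b)
    (B1 B3 : ℕ → ℝ) (hB1 : ∀ x : ℕ, a ≤ x → x ≤ b → B1 x < 0) :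
    ∃ E : ℝ,
      IsLeast (eigSet (HIsing (b - a + 1)
        + ∑ x ∈ Finset.range (b - a + 1),
            ((B1 (a + x) : ℂ) • siteOp (b - a + 1) S1 x
              + (B3 (a + x) : ℂ) • siteOp (b - a + 1) S3 x))) E ∧
      Module.finrank ℂ
        (Module.End.eigenspace
          (Matrix.mulVecLin (HIsing (b - a + 1)
            + ∑ x ∈ Finset.range (b - a + 1),
                ((B1 (a + x) : ℂ) • siteOp (b - a + 1) S1 x
                  + (B3 (a + x) : ℂ) • siteOp (b - a + 1) S3 x))) ((E : ℝ) : ℂ)) = 1 ∧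
      ∃ φ : Conf (b - a + 1) → ℂ,
        (HIsing (b - a + 1)
            + ∑ x ∈ Finset.range (b - a + 1),
                ((B1 (a + x) : ℂ) • siteOp (b - a + 1) S1 x
                  + (B3 (a + x) : ℂ) • siteOp (b - a + 1) S3 x)).mulVec φ
          = (E : ℂ) • φ ∧
        ∀ m : Conf (b - a + 1), ∃ r : ℝ, 0 < r ∧ φ m = (r : ℂ) := by
  have hB : ∀ x < b - a + 1, B1 (a + x) < 0 := fun x hx => hB1 _ (by omega) (by omega)
  obtain ⟨D, hD, hM⟩ :=
    HIsing_add_field_eq (b - a + 1) (fun x => B1 (a + x)) (fun x => B3 (a + x))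
  rw [hM]
  exact exists_ground_state_of_nonpos_offDiag (isHermitian_add_transverseField hD)
    (fun _ _ => add_transverseField_apply_nonpos hD fun x hx => (hB x hx).le)
    (connected_add_transverseField hD fun x hx => (hB x hx).ne)

/-- Perron–Frobenius: for `1 ≤ a < b` and fields `B¹, B³ : [a,b] → ℝ`
with `B¹(x) < 0` on `[a,b]`, the operator
`H^Ising_{[a,b]} + ∑_{x=a}^b (B¹(x)S¹_x + B³(x)S³_x)` on the sub-chain `⊗_{x=a}^b ℂ²`
(identified with `Conf (b-a+1)`, sub-site `i` being the paper's site `a+i`) has a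
simple lowest eigenvalue, with an eigenvector having strictly positive components in
the standard product basis. -/
theorem ising_perron_frobenius
    (a b : ℕ) (ha : 1 ≤ a) (hab : a < b)
    (B1 B3 : ℕ → ℝ) (hB1 : ∀ x : ℕ, a ≤ x → x ≤ b → B1 x < 0) :
    ∃ E : ℝ,
      IsLeast (eigSet (HIsing (b - a + 1)
        + ∑ x ∈ Finset.range (b - a + 1),
            ((B1 (a + x) : ℂ) • siteOp (b - a + 1) S1 x
              + (B3 (a + x) : ℂ) • siteOp (b - a + 1) S3 x))) E ∧
      Module.finrank ℂ
        (Module.End.eigenspace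
          (Matrix.mulVecLin (HIsing (b - a + 1)
            + ∑ x ∈ Finset.range (b - a + 1),
                ((B1 (a + x) : ℂ) • siteOp (b - a + 1) S1 x
                  + (B3 (a + x) : ℂ) • siteOp (b - a + 1) S3 x))) ((E : ℝ) : ℂ)) = 1 ∧
      ∃ φ : Conf (b - a + 1) → ℂ,
        (HIsing (b - a + 1)
            + ∑ x ∈ Finset.range (b - a + 1),
                ((B1 (a + x) : ℂ) • siteOp (b - a + 1) S1 x
                  + (B3 (a + x) : ℂ) • siteOp (b - a + 1) S3 x)).mulVec φ
          = (E : ℂ) • φ ∧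
        ∀ m : Conf (b - a + 1), ∃ r : ℝ, 0 < r ∧ φ m = (r : ℂ) :=
  ising_perron_frobenius_general a b hab B1 B3 hB1
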